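/- Let ℓ = ⌈k/2⌉, let Λ' be the lattice of tile centers (of mesh ℓ) and, for ξ ∈ Λ', let Δ_ξ be the tile of side ℓ centered at ξ. Let ξ ≠ η ∈ Λ'. If there exist rods r with center in Δ_ξ and r' with center in Δ_η such that r ∩ r' ≠ ∅, then either ξ and η lie on the same row or the same column of Λ' with |ξ − η| ≤ 2ℓ, or |ξ₁ − η₁| = |ξ₂ − η₂| = ℓ. Moreover, in the diagonal case |ξ₁ − η₁| = |ξ₂ − η₂| = ℓ, any two rods with the same orientation, one with center in Δ_ξ and one with center in Δ_η, are disjoint. -/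

import Mathlib

open scoped BigOperators

set_option linter.unusedVariables false

namespace HardRods

attribute [local instance] Classical.propDecidable

noncomputable section

/-- A site of the square lattice `ℤ²`. -/
abbrev Site : Type := ℤ × ℤ

/-- A rod: an orientation (`true` = horizontal, `false` = vertical) together with its
center site. -/
structure Rod where
  horiz : Bool
  center : Site
deriving DecidableEq

/-- The `k` sites occupied by a rod: `k` consecutive sites in a row (resp. column), whose
site closest to the geometric center (from the left, resp. from below, if `k` is even)
is `r.center`. -/
def rodSites (k : ℕ) (r : Rod) : Finset Site :=
  if r.horiz then
    (Finset.range k).image fun i =>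
      (r.center.1 - (((k - 1) / 2 : ℕ) : ℤ) + (i : ℤ), r.center.2)
  else
    (Finset.range k).image fun i =>
      (r.center.1, r.center.2 - (((k - 1) / 2 : ℕ) : ℤ) + (i : ℤ))

/-- Two rods are disjoint if they occupy disjoint sets of sites. -/
def rodsDisjoint (k : ℕ) (r r' : Rod) : Prop :=
  Disjoint (rodSites k r) (rodSites k r')

/-- Hard-core condition: the rods of the (multiset) configuration `R` are pairwise
disjoint. -/
def hardCore (k : ℕ) (R : Multiset Rod) : Prop :=
  R.Pairwise (rodsDisjoint k)

/-- `φ(R)`: hard-core indicator. -/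
noncomputable def phi (k : ℕ) (R : Multiset Rod) : ℝ := if hardCore k R then 1 else 0

/-- `ℓ = ⌈k/2⌉`. -/
def ell (k : ℕ) : ℕ := (k + 1) / 2

/-- Coarse index of the tile (square of side `ℓ`) containing a given site. -/
def tileIndex (k : ℕ) (x : Site) : Site :=
  (Int.fdiv x.1 (ell k), Int.fdiv x.2 (ell k))

/-- The tile with coarse index `ξ`, as a finite set of sites. -/
def tileF (k : ℕ) (ξ : Site) : Finset Site :=
  (Finset.Ico ((ell k : ℤ) * ξ.1) ((ell k : ℤ) * ξ.1 + (ell k : ℤ))) ×ˢ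
    (Finset.Ico ((ell k : ℤ) * ξ.2) ((ell k : ℤ) * ξ.2 + (ell k : ℤ)))

/-- Euclidean distance between two sites (or coarse tile indices). -/
noncomputable def cdist (ξ η : Site) : ℝ :=
  Real.sqrt ((((ξ.1 - η.1) : ℤ) : ℝ) ^ 2 + (((ξ.2 - η.2) : ℤ) : ℝ) ^ 2)

/-- Spin values: `0` codes spin `−1` (vertical), `1` codes spin `0` (empty),
`2` codes spin `+1` (horizontal). -/
abbrev Spin := Fin 3

/-- The spin corresponding to the boundary condition `q` (`true` = `+`). -/
def spinOf (q : Bool) : Spin := if q then 2 else 0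

/-- A rod is allowed in a tile of spin `s`. -/
def rodMatchesSpin (s : Spin) (r : Rod) : Prop :=
  (s = 2 ∧ r.horiz = true) ∨ (s = 0 ∧ r.horiz = false)

/-- A rod configuration `R` is compatible with the spin configuration `σ` on the coarse
region `L` (i.e. `R ∈ Ω_Λ(σ)`). -/
def compatOn (k : ℕ) (L : Finset Site) (σ : Site → Spin) (R : Multiset Rod) : Prop :=
  (∀ r ∈ R, tileIndex k r.center ∈ L) ∧
    ∀ r ∈ R, rodMatchesSpin (σ (tileIndex k r.center)) r

/-- Extend a spin configuration given on `L` by the empty spin outside `L`. -/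
noncomputable def extendSpin (L : Finset Site) (σ : (↥L) → Spin) : Site → Spin :=
  fun ξ => if h : ξ ∈ L then σ ⟨ξ, h⟩ else 1

/-- `φ̄(R)`: the product of the tile activities `ζ(ξ)` times the hard-core factor. -/
noncomputable def barPhi (k : ℕ) (z : ℝ) (L : Finset Site) (σ : Site → Spin)
    (R : Multiset Rod) : ℝ :=
  ((-1 : ℝ) ^ (L.filter fun ξ => σ ξ = 1).card) * z ^ (Multiset.card R) * phi k R

/-- `q` boundary conditions: the spin equals `q` on every tile within rescaled distance 5
of the (coarse) complement of `L`. -/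
def bdryOK (L : Finset Site) (q : Bool) (σ : Site → Spin) : Prop :=
  ∀ ξ ∈ L, (∃ η : Site, η ∉ L ∧ cdist ξ η ≤ 5) → σ ξ = spinOf q

/-- Hard-core compatibility with a frozen rod configuration. -/
def crossOK (k : ℕ) (R Rf : Multiset Rod) : Prop :=
  ∀ r ∈ R, ∀ r' ∈ Rf, rodsDisjoint k r r'

/-- General partition sum on the coarse region `L` with `q` boundary conditions, frozen
rods `Rf` and observable `A`. -/
noncomputable def Zgen (k : ℕ) (z : ℝ) (L : Finset Site) (q : Bool) (Rf : Multiset Rod)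
    (A : Multiset Rod → ℝ) : ℝ :=
  ∑ σ : (↥L) → Spin,
    if bdryOK L q (extendSpin L σ) then
      ∑' R : Multiset Rod,
        (if compatOn k L (extendSpin L σ) R ∧ crossOK k R Rf then
          barPhi k z L (extendSpin L σ) R * A R else 0)
    else 0

/-- `Z(Λ|q)`: partition function with `q` boundary conditions. -/
noncomputable def Zbc (k : ℕ) (z : ℝ) (L : Finset Site) (q : Bool) : ℝ :=
  Zgen k z L q 0 fun _ => 1

/-- `⟨A⟩_Λ^q`: finite-volume Gibbs expectation with `q` boundary conditions. -/
noncomputable def expVal (k : ℕ) (z : ℝ) (L : Finset Site) (q : Bool)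
    (A : Multiset Rod → ℝ) : ℝ :=
  Zgen k z L q 0 A / Zbc k z L q

/-- Coarse box of `4N × 4N` tiles: a square box of side `4ℓN` sites, divisible by `4ℓ`. -/
def boxC (N : ℕ) : Finset Site :=
  (Finset.Ico (-(2 * (N : ℤ))) (2 * (N : ℤ))) ×ˢ
    (Finset.Ico (-(2 * (N : ℤ))) (2 * (N : ℤ)))

/-- A local observable depending only on the restriction of the rod configuration to the
finite set of sites `X`. -/
def IsLocal (X : Finset Site) (A : Multiset Rod → ℝ) : Prop :=
  ∀ R : Multiset Rod, A R = A (R.filter fun r => r.center ∈ X)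

/-- Translation of a rod by `v ∈ ℤ²`. -/
def shiftRod (v : Site) (r : Rod) : Rod := ⟨r.horiz, (r.center.1 + v.1, r.center.2 + v.2)⟩

/-- Translate of an observable by `v ∈ ℤ²`. -/
noncomputable def shiftObs (v : Site) (A : Multiset Rod → ℝ) : Multiset Rod → ℝ :=
  fun R => A (R.map (shiftRod (-v.1, -v.2)))

/-- `χ^q_{ξ₀}`: indicator that the restriction of the rod configuration to the tile
`Δ_{ξ₀}` belongs to `Ω^q_{Δ_{ξ₀}}` (all rods in the tile have orientation `q`, or the
tile is empty). -/
noncomputable def chiInd (k : ℕ) (q : Bool) (ξ0 : Site) : Multiset Rod → ℝ := fun R =>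
  if ∀ r ∈ R, tileIndex k r.center = ξ0 → r.horiz = q then 1 else 0

/-- `n_{x₀}`: indicator that some rod has its center at the site `x₀`. -/
noncomputable def nInd (x0 : Site) : Multiset Rod → ℝ := fun R =>
  if ∃ r ∈ R, r.center = x0 then 1 else 0

/-! ### Mayer (Ursell) coefficients and restricted ensembles -/

/-- Edges of the connectivity graph of the list `l` for the link relation `link`. -/
noncomputable def linkEdges {α : Type*} (link : α → α → Prop) (l : List α) :
    Finset (Fin l.length × Fin l.length) :=
  Finset.univ.filter fun p => p.1 < p.2 ∧ link (l.get p.1) (l.get p.2)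

/-- The graph on `Fin n` generated by a set of edges. -/
def graphOf {n : ℕ} (C : Finset (Fin n × Fin n)) : SimpleGraph (Fin n) where
  Adj i j := i ≠ j ∧ ((i, j) ∈ C ∨ (j, i) ∈ C)
  symm := by
    constructor
    intro i j h
    exact ⟨h.1.symm, h.2.symm⟩
  loopless := by
    constructor
    intro i h
    exact h.1 rfl

/-- Ursell/Mayer coefficient `φ^T` of a finite multiset with respect to a link relation:
`0` on the empty multiset, `1` on singletons, and otherwise
`(1/R!) Σ_C (−1)^{#edges of C}` over the connected spanning subgraphs `C` of the
connectivity graph. -/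
noncomputable def ursell {α : Type*} (link : α → α → Prop) (R : Multiset α) : ℝ :=
  if Multiset.card R = 0 then 0
  else if Multiset.card R = 1 then 1
  else
    (∏ a ∈ R.toFinset, ((R.count a).factorial : ℝ))⁻¹ *
      ∑ C ∈ (linkEdges link R.toList).powerset,
        if (graphOf C).Connected then (-1 : ℝ) ^ C.card else 0

/-- `φ^T(R)` for rod configurations (two rods are linked iff they intersect). -/
noncomputable def mayer (k : ℕ) (R : Multiset Rod) : ℝ :=
  ursell (fun r r' => ¬ rodsDisjoint k r r') R

/-- `R ∈ Ω^q_X`: all rods of `R` have orientation `q` and belong to (have their center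
in) `X`. -/
def memOmega (k : ℕ) (q : Bool) (X : Set Site) (R : Multiset Rod) : Prop :=
  ∀ r ∈ R, r.horiz = q ∧ r.center ∈ X

/-- `Z^q(X)`: restricted partition function (only rods of orientation `q`). -/
noncomputable def Zres (k : ℕ) (z : ℝ) (q : Bool) (X : Set Site) : ℝ :=
  ∑' R : Multiset Rod, if memOmega k q X R then z ^ (Multiset.card R) * phi k R else 0

/-- Generic term `z^{|R|} φ^T(R)` of the Mayer series for `log Z^q(X)`. -/
noncomputable def mayerTerm (k : ℕ) (z : ℝ) (q : Bool) (X : Set Site)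
    (R : Multiset Rod) : ℝ :=
  if memOmega k q X R then z ^ (Multiset.card R) * mayer k R else 0

/-- `X` is a union of tiles. -/
def IsTileUnion (k : ℕ) (X : Finset Site) : Prop :=
  ∃ T : Finset Site, ∀ x : Site, x ∈ X ↔ tileIndex k x ∈ T

/-- `V(R)`: the set of centers of the rods of `R`. -/
def Vcenters (R : Multiset Rod) : Finset Site := (R.map Rod.center).toFinset

/-- `supp(R)`: the sites occupied by the rods of `R`. -/
def suppR (k : ℕ) (R : Multiset Rod) : Set Site := {x | ∃ r ∈ R, x ∈ rodSites k r}

/-- Diameter of the support of `R`. -/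
noncomputable def diamSupp (k : ℕ) (R : Multiset Rod) : ℝ :=
  sSup {t : ℝ | ∃ p ∈ suppR k R, ∃ p' ∈ suppR k R, t = cdist p p'}


/-! ### Contours and polymers -/

/-- Nearest-neighbor adjacency on the coarse lattice. -/
def nnAdj (xi eta : Site) : Prop :=
  (xi.1 = eta.1 ∧ (xi.2 - eta.2).natAbs = 1) ∨ (xi.2 = eta.2 ∧ (xi.1 - eta.1).natAbs = 1)

/-- Diagonal ("D") adjacency on the coarse lattice. -/
def dAdj (xi eta : Site) : Prop :=
  xi ≠ eta ∧ (xi.1 - eta.1).natAbs ≤ 1 ∧ (xi.2 - eta.2).natAbs ≤ 1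

/-- `S` is D-connected. -/
def DConnected (S : Finset Site) : Prop :=
  ∀ x ∈ S, ∀ y ∈ S, Relation.ReflTransGen (fun a b => a ∈ S ∧ b ∈ S ∧ dAdj a b) x y

/-- `A` and `B` are D-disconnected from each other. -/
def DSep (A B : Finset Site) : Prop :=
  ∀ xi ∈ A, ∀ eta ∈ B, ¬(xi = eta ∨ dAdj xi eta)

/-- Coarse index of the smoothing square (block of `4 × 4` tiles) containing a tile. -/
def blockIndex (xi : Site) : Site := (Int.fdiv xi.1 4, Int.fdiv xi.2 4)

/-- The smoothing square with block index `a`, as a set of (coarse) tile indices. -/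
def blockF (a : Site) : Finset Site :=
  (Finset.Ico (4 * a.1) (4 * a.1 + 4)) ×ˢ (Finset.Ico (4 * a.2) (4 * a.2 + 4))

/-- `S` is a union of smoothing squares. -/
def BlockClosed (S : Finset Site) : Prop := ∀ xi ∈ S, blockF (blockIndex xi) ⊆ S

/-- The four nearest neighbors of a coarse point. -/
def nbhd (xi : Site) : Finset Site :=
  {(xi.1 + 1, xi.2), (xi.1 - 1, xi.2), (xi.1, xi.2 + 1), (xi.1, xi.2 - 1)}

/-- The 1-tile-thick peel of `Γ`: the tiles outside `Γ` at rescaled distance 1 of `Γ`. -/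
def peel (G : Finset Site) : Finset Site :=
  (G.biUnion nbhd).filter fun eta => eta ∉ G

/-- A (slightly enlarged) bounding box of `Γ`. -/
def bbox (G : Finset Site) : Finset Site :=
  if h : G.Nonempty then
    (Finset.Icc (G.inf' h Prod.fst - 1) (G.sup' h Prod.fst + 1)) ×ˢ
      (Finset.Icc (G.inf' h Prod.snd - 1) (G.sup' h Prod.snd + 1))
  else ∅

/-- A coarse point escapes to infinity in the complement of `Γ`. -/
def escapes (G : Finset Site) (xi : Site) : Prop :=
  ∃ eta : Site, eta ∉ bbox G ∧
    Relation.ReflTransGen (fun a b => a ∉ G ∧ b ∉ G ∧ nnAdj a b) xi eta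

/-- `Int Γ`: the union of the bounded connected components of the complement of `Γ`. -/
def interiorOf (G : Finset Site) : Finset Site :=
  (bbox G).filter fun xi => xi ∉ G ∧ ¬ escapes G xi

/-- Two points lie in the same (nearest-neighbor) connected component of `S`. -/
def sameComp (S : Finset Site) (x y : Site) : Prop :=
  Relation.ReflTransGen (fun a b => a ∈ S ∧ b ∈ S ∧ nnAdj a b) x y

/-- The connected component of `ξ` in `S`. -/
def compOf (S : Finset Site) (xi : Site) : Finset Site := S.filter (sameComp S xi)

/-- The connected components of `S`. -/
def comps (S : Finset Site) : Finset (Finset Site) := S.image (compOf S)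

/-- A contour `γ = (Γ, σ_γ, R_γ, m_ext, m̲_int)`. -/
structure Contour where
  supp : Finset Site
  spin : Site → Spin
  rods : Multiset Rod
  mext : Bool
  mint : Site → Bool

/-- The spin configuration of a contour, extended to the rest of the lattice by the
external and internal magnetizations. -/
def extSpin (g : Contour) : Site → Spin := fun xi =>
  if xi ∈ g.supp then g.spin xi
  else if xi ∈ interiorOf g.supp then spinOf (g.mint xi)
  else spinOf g.mext

/-- The sampling square associated to `ξ` (a `2 × 2` square of tiles). -/
def sampSq (xi : Site) : Finset Site :=
  {xi, (xi.1 + 1, xi.2), (xi.1, xi.2 + 1), (xi.1 + 1, xi.2 + 1)}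

/-- A sampling square is good if its spins are all `+1` or all `−1`. -/
def goodSq (sig : Site → Spin) (xi : Site) : Prop :=
  (∀ eta ∈ sampSq xi, sig eta = 2) ∨ (∀ eta ∈ sampSq xi, sig eta = 0)

/-- `γ` is a valid `q`-contour inside the coarse region `Lc`. -/
def IsContour (k : ℕ) (Lc : Set Site) (q : Bool) (g : Contour) : Prop :=
  g.supp.Nonempty ∧ (↑g.supp : Set Site) ⊆ Lc ∧ BlockClosed g.supp ∧
  DConnected g.supp ∧ g.mext = q ∧
  (∀ xi, xi ∉ g.supp → g.spin xi = 1) ∧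
  (∀ xi, xi ∉ interiorOf g.supp → g.mint xi = false) ∧
  (∀ xi ∈ interiorOf g.supp, ∀ eta ∈ interiorOf g.supp,
      sameComp (interiorOf g.supp) xi eta → g.mint xi = g.mint eta) ∧
  compatOn k g.supp g.spin g.rods ∧
  (∀ xi : Site, ((sampSq xi) ∩ peel g.supp).Nonempty → goodSq (extSpin g) xi) ∧
  (∀ a : Site, blockF a ⊆ g.supp →
    ∃ xi : Site, ¬ goodSq (extSpin g) xi ∧ ((sampSq xi) ∩ blockF a).Nonempty)

/-- `A` and `B` are separated by at least one smoothing square. -/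
def WellSep (A B : Finset Site) : Prop :=
  ∀ xi ∈ A, ∀ eta ∈ B, 4 ≤ max (xi.1 - eta.1).natAbs (xi.2 - eta.2).natAbs

/-- `D ∈ 𝒞(Λ,q)`: a family of `q`-contours whose supports are pairwise separated, and
separated from the complement of `Lc`, by at least one smoothing square. -/
def IsFamily (k : ℕ) (Lc : Set Site) (q : Bool) (D : Finset Contour) : Prop :=
  (∀ g ∈ D, IsContour k Lc q g) ∧
  (∀ g ∈ D, ∀ g' ∈ D, g ≠ g' → WellSep g.supp g'.supp) ∧
  (∀ g ∈ D, ∀ xi ∈ g.supp, ∀ eta : Site, eta ∉ Lc →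
      4 ≤ max (xi.1 - eta.1).natAbs (xi.2 - eta.2).natAbs)

/-- The rescaled `L¹` distance of `η` from `Γ` equals `n`. -/
def l1distEq (eta : Site) (G : Finset Site) (n : ℕ) : Prop :=
  (∀ g ∈ G, n ≤ (eta.1 - g.1).natAbs + (eta.2 - g.2).natAbs) ∧
  ∃ g ∈ G, (eta.1 - g.1).natAbs + (eta.2 - g.2).natAbs = n

/-- The coarse set `a_γ(ξ)` (for a `q`-contour with support `Γ`). -/
def aSet (q : Bool) (G : Finset Site) (xi : Site) : Finset Site :=
  {xi} ∪ (nbhd xi).filter fun eta =>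
    l1distEq eta G 2 ∧ (if q then eta.2 = xi.2 else eta.1 = xi.1)

/-- The coarse set of tiles of `C_γ(Δ_ξ)`. -/
def cSet (G : Finset Site) (xi : Site) : Finset Site :=
  G.filter fun eta => cdist eta xi ≤ 2

/-- `R` has at least one rod belonging to the union of the tiles indexed by `T`. -/
def hasRodIn (k : ℕ) (R : Multiset Rod) (T : Finset Site) : Prop :=
  ∃ r ∈ R, tileIndex k r.center ∈ T

/-- The characteristic function `f_Δ`. -/
def fInd (k : ℕ) (q : Bool) (g : Contour) (xi : Site) (R : Multiset Rod) : ℝ :=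
  if hasRodIn k R (aSet q g.supp xi) ∧ hasRodIn k R (cSet g.supp xi) then 1 else 0

/-- The characteristic function `g_Δ`. -/
def gInd (k : ℕ) (q : Bool) (g : Contour) (xi : Site) (R : Multiset Rod) : ℝ :=
  if (∃ r ∈ R, ∃ r' ∈ g.rods, ¬ rodsDisjoint k r r') ∧
      hasRodIn k R (aSet q g.supp xi) ∧ hasRodIn k g.rods (cSet g.supp xi) then 1 else 0

/-- `F_Δ = f_Δ` on the internal peel, `F_Δ = f_Δ + g_Δ(1 − f_Δ)` on the external peel. -/
def FInd (k : ℕ) (q : Bool) (g : Contour) (xi : Site) (R : Multiset Rod) : ℝ :=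
  if xi ∈ interiorOf g.supp then fInd k q g xi R
  else fInd k q g xi R + gInd k q g xi R * (1 - fInd k q g xi R)

/-- The fine (site-level) region corresponding to a coarse (tile-level) region. -/
def fineOf (k : ℕ) (S : Set Site) : Set Site := {x | tileIndex k x ∈ S}

/-- The (constant) internal magnetization of an interior component. -/
def intBC (g : Contour) (Cmp : Finset Site) : Bool :=
  if ∀ xi ∈ Cmp, g.mint xi = true then true else false

/-- `ζ⁰_q(γ) = [φ̄(R_γ)/Z^q(Γ)] Π_j Z_γ(Int_j Γ | m^j_int)/Z(Int_j Γ | q)`. -/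
def zeta0 (k : ℕ) (z : ℝ) (q : Bool) (g : Contour) : ℝ :=
  (barPhi k z g.supp g.spin g.rods / Zres k z q (fineOf k (↑g.supp : Set Site))) *
    ∏ Cmp ∈ comps (interiorOf g.supp),
      Zgen k z Cmp (intBC g Cmp) g.rods (fun _ => 1) / Zbc k z Cmp q

/-- The contour activity `ζ_q(γ)`. -/
def zetaA (k : ℕ) (z : ℝ) (q : Bool) (Lc : Set Site) (g : Contour) : ℝ :=
  zeta0 k z q g *
    Real.exp (-(∑' R : Multiset Rod,
      if memOmega k q (fineOf k Lc) R then
        z ^ (Multiset.card R) * mayer k R * ∑ xi ∈ peel g.supp, FInd k q g xi R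
      else 0))

/-- The union of the peels of the contours of a family. -/
def peelTiles (D : Finset Contour) : Finset Site := D.sup fun g => peel g.supp

/-- `F_Δ` for a tile in the peel of (the unique) contour of the family `D`. -/
def FIndFam (k : ℕ) (q : Bool) (D : Finset Contour) (xi : Site)
    (R : Multiset Rod) : ℝ :=
  ∑ g ∈ D.filter (fun g => xi ∈ peel g.supp), FInd k q g xi R

/-- The tiles of `S` all lie on a common row (`q = +`) or column (`q = −`). -/
def aligned (q : Bool) (S : Finset Site) : Prop :=
  if q then ∀ xi ∈ S, ∀ eta ∈ S, xi.2 = eta.2 else ∀ xi ∈ S, ∀ eta ∈ S, xi.1 = eta.1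

/-- The multi-contour interaction `W(∂)`. -/
def Wfam (k : ℕ) (z : ℝ) (q : Bool) (Lc : Set Site) (D : Finset Contour) : ℝ :=
  ∑' R : Multiset Rod,
    if memOmega k q (fineOf k Lc) R then
      z ^ (Multiset.card R) * mayer k R *
        ∑ S ∈ (peelTiles D).powerset,
          if 2 ≤ S.card ∧ aligned q S then
            (-1 : ℝ) ^ (S.card + 1) * ∏ xi ∈ S, FIndFam k q D xi R
          else 0
    else 0

/-- `Y ∈ 𝒴^q_{X_∂}`: a collection of at least two distinct tiles of the peels of the
contours of `D`, all lying on a common row (`q = +`) or column (`q = −`). -/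
def IsYset (k : ℕ) (q : Bool) (D : Finset Contour) (Y : Finset Site) : Prop :=
  2 ≤ Y.card ∧ Y ⊆ peelTiles D ∧ aligned q Y

/-- `Ȳ`: the union of all the tiles between the first and the last tile of `Y`. -/
def hull (q : Bool) (Y : Finset Site) : Finset Site :=
  if h : Y.Nonempty then
    if q then
      (Finset.Icc ((Y.image Prod.fst).min' (h.image Prod.fst))
          ((Y.image Prod.fst).max' (h.image Prod.fst))) ×ˢ (Y.image Prod.snd)
    else
      (Y.image Prod.fst) ×ˢ
        (Finset.Icc ((Y.image Prod.snd).min' (h.image Prod.snd))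
          ((Y.image Prod.snd).max' (h.image Prod.snd)))
  else ∅

/-- `𝔽(Y)`. -/
def FF (k : ℕ) (z : ℝ) (q : Bool) (Lc : Set Site) (D : Finset Contour)
    (Y : Finset Site) : ℝ :=
  (-1 : ℝ) ^ Y.card *
    ∑' R : Multiset Rod,
      if memOmega k q (fineOf k Lc) R then
        z ^ (Multiset.card R) * mayer k R * ∏ xi ∈ Y, FIndFam k q D xi R
      else 0

/-- The polymer activity `K^{(Λ)}_q(X)` (and its infinite-volume version, for
`Lc = Set.univ`). -/
def polyK (k : ℕ) (z : ℝ) (q : Bool) (Lc : Set Site) (X : Finset Site) : ℝ :=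
  ∑' D : Finset Contour, ∑' Ys : Finset (Finset Site),
    if IsFamily k Lc q D ∧ D.Nonempty ∧ (∀ Y ∈ Ys, IsYset k q D Y) ∧
        (D.sup Contour.supp) ∪ Ys.sup (hull q) = X then
      (∏ g ∈ D, zetaA k z q Lc g) * ∏ Y ∈ Ys, (Real.exp (FF k z q Lc D Y) - 1)
    else 0

/-- A polymer: a nonempty D-connected union of tiles in `Lc`. -/
def IsPolymer (Lc : Set Site) (X : Finset Site) : Prop :=
  X.Nonempty ∧ DConnected X ∧ (↑X : Set Site) ⊆ Lc

/-- The Peierls bound on the contour activities, Eq. (4.28) of the paper, with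
`c₀ = 5·10⁻⁴`: for every admissible spin configuration on a contour support, the sum
over the rod configurations of the contour of `|ζ_q(γ)|` is at most
`e^{−c₀ z k² |Γ'|}`. -/
def PeierlsBound (k : ℕ) (z : ℝ) (q : Bool) (Lc : Set Site) : Prop :=
  ∀ (G : Finset Site) (sig : Site → Spin) (mext : Bool) (mint : Site → Bool),
    (∑' Rg : Multiset Rod,
      if IsContour k Lc q ⟨G, sig, Rg, mext, mint⟩ then
        |zetaA k z q Lc ⟨G, sig, Rg, mext, mint⟩| else 0)
      ≤ Real.exp (-(5e-4 : ℝ) * z * (k : ℝ) ^ 2 * (G.card : ℝ))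

/-- The fine region of a coarse finite region, as a finite set of sites. -/
def fineF (k : ℕ) (X : Finset Site) : Finset Site := X.biUnion (tileF k)

/-- The boundary term `Σ_{R ∈ Ω^q_{ℤ²}∖Ω^q_X : V(R)∋x} φ^T(R) z^{|R|}/|V(R)|`. -/
def bTerm (k : ℕ) (z : ℝ) (q : Bool) (X : Finset Site) (x : Site) : ℝ :=
  ∑' R : Multiset Rod,
    if memOmega k q Set.univ R ∧ ¬ memOmega k q (fineOf k (↑X : Set Site)) R ∧
        x ∈ Vcenters R then
      mayer k R * z ^ (Multiset.card R) / ((Vcenters R).card : ℝ)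
    else 0

/-- The bulk term `s(z) = Σ_{R ∈ Ω^q_{ℤ²} : V(R)∋x} φ^T(R) z^{|R|}/|V(R)|`. -/
def sTerm (k : ℕ) (z : ℝ) (q : Bool) (x : Site) : ℝ :=
  ∑' R : Multiset Rod,
    if memOmega k q Set.univ R ∧ x ∈ Vcenters R then
      mayer k R * z ^ (Multiset.card R) / ((Vcenters R).card : ℝ)
    else 0

/-- `ε = max{ε₁, ε₂}` with `ε₁ = e^{−(c₀/6) z k²}` and `ε₂ = (zk)^{1/32}`. -/
def epsOf (k : ℕ) (z : ℝ) : ℝ :=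
  max (Real.exp (-(5e-4 : ℝ) * z * (k : ℝ) ^ 2 / 6)) ((z * (k : ℝ)) ^ ((1 : ℝ) / 32))

/-- Distance between two sets of (coarse) lattice points. -/
def distSets (A B : Set Site) : ℝ :=
  sInf {d : ℝ | ∃ a ∈ A, ∃ b ∈ B, d = cdist a b}

/-- `S` is connected (in the nearest-neighbor sense). -/
def NNConnectedF (S : Finset Site) : Prop := ∀ x ∈ S, ∀ y ∈ S, sameComp S x y


private lemma fdiv_sub_le' {L a b c : ℤ} (hL : 0 < L) (h : a - b ≤ c * L) :
    a.fdiv L - b.fdiv L ≤ c := by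
  have h1 : a.fdiv L ≤ (b + c * L).fdiv L := by
    rw [Int.fdiv_eq_ediv_of_nonneg _ hL.le, Int.fdiv_eq_ediv_of_nonneg _ hL.le]
    exact Int.ediv_le_ediv hL (by linarith)
  have h2 : (b + c * L).fdiv L = b.fdiv L + c := by
    rw [Int.fdiv_eq_ediv_of_nonneg _ hL.le, Int.fdiv_eq_ediv_of_nonneg _ hL.le]
    exact Int.add_mul_ediv_right _ _ hL.ne'
  omega

private lemma rodSites_mem' {k : ℕ} {r : Rod} {x : Site} (h : x ∈ rodSites k r) :
    (r.horiz = true ∧ x.2 = r.center.2 ∧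
      r.center.1 - (((k - 1) / 2 : ℕ) : ℤ) ≤ x.1 ∧
      x.1 ≤ r.center.1 - (((k - 1) / 2 : ℕ) : ℤ) + ((k - 1 : ℕ) : ℤ)) ∨
    (r.horiz = false ∧ x.1 = r.center.1 ∧
      r.center.2 - (((k - 1) / 2 : ℕ) : ℤ) ≤ x.2 ∧
      x.2 ≤ r.center.2 - (((k - 1) / 2 : ℕ) : ℤ) + ((k - 1 : ℕ) : ℤ)) := by
  unfold rodSites at h
  cases hb : r.horiz with
  | true =>
    rw [hb, if_pos rfl] at h
    obtain ⟨i, hi, rfl⟩ := Finset.mem_image.mp h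
    simp at hi
    obtain ⟨a, ha, rfl⟩ := hi
    exact Or.inl ⟨rfl, rfl, by omega, by omega⟩
  | false =>
    rw [hb, if_neg (by simp)] at h
    obtain ⟨i, hi, rfl⟩ := Finset.mem_image.mp h
    simp at hi
    obtain ⟨a, ha, rfl⟩ := hi
    exact Or.inr ⟨rfl, rfl, by omega, by omega⟩

/-- If two rods with centers in distinct tiles `Δ_ξ`, `Δ_η` intersect,
then either `ξ` and `η` lie on the same row or column of the coarse lattice at distance
at most `2ℓ` (i.e. coarse distance at most 2), or they are diagonal neighbors
(`|ξ₁−η₁| = |ξ₂−η₂| = ℓ`, i.e. coarse distance 1 in each coordinate). Moreover, in the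
diagonal case any two rods with the same orientation, one per tile, are disjoint. -/
theorem interacting_tiles_geometry (k : ℕ) (hk : 2 ≤ k) :
    (∀ ξ η : Site, ξ ≠ η →
      (∃ r r' : Rod, tileIndex k r.center = ξ ∧ tileIndex k r'.center = η ∧
        ¬ rodsDisjoint k r r') →
      ((ξ.2 = η.2 ∧ (ξ.1 - η.1).natAbs ≤ 2) ∨
        (ξ.1 = η.1 ∧ (ξ.2 - η.2).natAbs ≤ 2) ∨
        ((ξ.1 - η.1).natAbs = 1 ∧ (ξ.2 - η.2).natAbs = 1))) ∧
    (∀ ξ η : Site, (ξ.1 - η.1).natAbs = 1 → (ξ.2 - η.2).natAbs = 1 →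
      ∀ r r' : Rod, tileIndex k r.center = ξ → tileIndex k r'.center = η →
        r.horiz = r'.horiz → rodsDisjoint k r r') := by
  have hL : 0 < ((ell k : ℕ) : ℤ) := by unfold ell; omega
  have hd : (((k - 1) / 2 : ℕ) : ℤ) ≤ ((ell k : ℕ) : ℤ) := by unfold ell; omega
  have he : ((k - 1 : ℕ) : ℤ) ≤ (((k - 1) / 2 : ℕ) : ℤ) + ((ell k : ℕ) : ℤ) := by
    unfold ell; omega
  have he2 : ((k - 1 : ℕ) : ℤ) ≤ 2 * ((ell k : ℕ) : ℤ) := by unfold ell; omega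
  constructor
  · rintro ξ η hne ⟨r, r', hξ, hη, hnd⟩
    obtain ⟨x, hx, hx'⟩ := Finset.not_disjoint_iff.mp hnd
    have hξ1 : ξ.1 = Int.fdiv r.center.1 (ell k) := by rw [← hξ]; rfl
    have hξ2 : ξ.2 = Int.fdiv r.center.2 (ell k) := by rw [← hξ]; rfl
    have hη1 : η.1 = Int.fdiv r'.center.1 (ell k) := by rw [← hη]; rfl
    have hη2 : η.2 = Int.fdiv r'.center.2 (ell k) := by rw [← hη]; rfl
    have hne' : ξ.1 ≠ η.1 ∨ ξ.2 ≠ η.2 := by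
      by_contra hc
      push_neg at hc
      exact hne (Prod.ext hc.1 hc.2)
    rcases rodSites_mem' hx with ⟨_, hy, hlo, hhi⟩ | ⟨_, hy, hlo, hhi⟩ <;>
      rcases rodSites_mem' hx' with ⟨_, hy', hlo', hhi'⟩ | ⟨_, hy', hlo', hhi'⟩
    · -- both horizontal
      have e2 : Int.fdiv r.center.2 (ell k) = Int.fdiv r'.center.2 (ell k) := by
        rw [hy.symm.trans hy']
      have b1 : Int.fdiv r.center.1 (ell k) - Int.fdiv r'.center.1 (ell k) ≤ 2 :=
        fdiv_sub_le' hL (by omega)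
      have b2 : Int.fdiv r'.center.1 (ell k) - Int.fdiv r.center.1 (ell k) ≤ 2 :=
        fdiv_sub_le' hL (by omega)
      omega
    · -- r horizontal, r' vertical
      have b1 : Int.fdiv r.center.1 (ell k) - Int.fdiv r'.center.1 (ell k) ≤ 1 :=
        fdiv_sub_le' hL (by omega)
      have b2 : Int.fdiv r'.center.1 (ell k) - Int.fdiv r.center.1 (ell k) ≤ 1 :=
        fdiv_sub_le' hL (by omega)
      have b3 : Int.fdiv r.center.2 (ell k) - Int.fdiv r'.center.2 (ell k) ≤ 1 :=
        fdiv_sub_le' hL (by omega)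
      have b4 : Int.fdiv r'.center.2 (ell k) - Int.fdiv r.center.2 (ell k) ≤ 1 :=
        fdiv_sub_le' hL (by omega)
      omega
    · -- r vertical, r' horizontal
      have b1 : Int.fdiv r.center.1 (ell k) - Int.fdiv r'.center.1 (ell k) ≤ 1 :=
        fdiv_sub_le' hL (by omega)
      have b2 : Int.fdiv r'.center.1 (ell k) - Int.fdiv r.center.1 (ell k) ≤ 1 :=
        fdiv_sub_le' hL (by omega)
      have b3 : Int.fdiv r.center.2 (ell k) - Int.fdiv r'.center.2 (ell k) ≤ 1 :=
        fdiv_sub_le' hL (by omega)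
      have b4 : Int.fdiv r'.center.2 (ell k) - Int.fdiv r.center.2 (ell k) ≤ 1 :=
        fdiv_sub_le' hL (by omega)
      omega
    · -- both vertical
      have e1 : Int.fdiv r.center.1 (ell k) = Int.fdiv r'.center.1 (ell k) := by
        rw [hy.symm.trans hy']
      have b1 : Int.fdiv r.center.2 (ell k) - Int.fdiv r'.center.2 (ell k) ≤ 2 :=
        fdiv_sub_le' hL (by omega)
      have b2 : Int.fdiv r'.center.2 (ell k) - Int.fdiv r.center.2 (ell k) ≤ 2 :=
        fdiv_sub_le' hL (by omega)
      omega
  · intro ξ η h1 h2 r r' hξ hη hor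
    by_contra hnd
    obtain ⟨x, hx, hx'⟩ := Finset.not_disjoint_iff.mp hnd
    have hξ1 : ξ.1 = Int.fdiv r.center.1 (ell k) := by rw [← hξ]; rfl
    have hξ2 : ξ.2 = Int.fdiv r.center.2 (ell k) := by rw [← hξ]; rfl
    have hη1 : η.1 = Int.fdiv r'.center.1 (ell k) := by rw [← hη]; rfl
    have hη2 : η.2 = Int.fdiv r'.center.2 (ell k) := by rw [← hη]; rfl
    rcases rodSites_mem' hx with ⟨hb, hy, _, _⟩ | ⟨hb, hy, _, _⟩ <;>
      rcases rodSites_mem' hx' with ⟨hb', hy', _, _⟩ | ⟨hb', hy', _, _⟩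
    · have : r.center.2 = r'.center.2 := hy.symm.trans hy'
      rw [hξ2, hη2, this] at h2
      omega
    · rw [hb, hb'] at hor; exact absurd hor (by simp)
    · rw [hb, hb'] at hor; exact absurd hor (by simp)
    · have : r.center.1 = r'.center.1 := hy.symm.trans hy'
      rw [hξ1, hη1, this] at h1
      omega

end

end HardRods
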